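/- Let (M²,g) be a Riemannian surface and T a symmetric (1,1)-tensor field whose eigenvalue functions λ₁ ≥ λ₂ are constant on M. If T is a Codazzi tensor field, then ∇T = 0. Moreover, if λ₁ > λ₂, then the Gaussian curvature of (M,g) vanishes identically. -/

import Mathlib

/-- Abstract model of the `C^∞(M)`-module of (local) vector fields on an
`m`-dimensional Riemannian manifold, equipped with an orthonormal frame `E`,
the Levi-Civita connection `D`, and the derivation action `act` of vector
fields on smooth functions `F`. -/
structure RiemannianFrame (m : ℕ) where
  F : Type
  V : Type
  [instCommRing : CommRing F]
  [instAlgebra : Algebra ℝ F]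
  [instAddCommGroup : AddCommGroup V]
  [instModule : Module F V]
  g : V → V → F
  D : V → V → V
  act : V → F → F
  bracket : V → V → V
  E : Fin m → V
  g_symm : ∀ X Y, g X Y = g Y X
  g_addl : ∀ X Y Z, g (X + Y) Z = g X Z + g Y Z
  g_smull : ∀ (f : F) (X Y : V), g (f • X) Y = f * g X Y
  act_addf : ∀ (X : V) (f h : F), act X (f + h) = act X f + act X h
  act_mulf : ∀ (X : V) (f h : F), act X (f * h) = act X f * h + f * act X h
  act_addX : ∀ (X Y : V) (f : F), act (X + Y) f = act X f + act Y f
  act_smulX : ∀ (f : F) (X : V) (h : F), act (f • X) h = f * act X h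
  act_const : ∀ (X : V) (r : ℝ), act X (algebraMap ℝ F r) = 0
  D_addX : ∀ X Y Z, D (X + Y) Z = D X Z + D Y Z
  D_smulX : ∀ (f : F) (X Y : V), D (f • X) Y = f • D X Y
  D_addY : ∀ X Y Z, D X (Y + Z) = D X Y + D X Z
  D_leibniz : ∀ (X : V) (f : F) (Y : V), D X (f • Y) = act X f • Y + f • D X Y
  metric_compat : ∀ X Y Z, act X (g Y Z) = g (D X Y) Z + g Y (D X Z)
  torsion_free : ∀ X Y, D X Y - D Y X = bracket X Y
  bracket_act : ∀ (X Y : V) (f : F),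
    act (bracket X Y) f = act X (act Y f) - act Y (act X f)
  frame_orthonormal : ∀ i j, g (E i) (E j) = if i = j then 1 else 0
  frame_span : ∀ X, X = ∑ i, g X (E i) • E i

attribute [instance] RiemannianFrame.instCommRing RiemannianFrame.instAlgebra
  RiemannianFrame.instAddCommGroup RiemannianFrame.instModule

namespace RiemannianFrame

variable {m : ℕ} (R : RiemannianFrame m)

/-- The covariant derivative `(∇_X T)(Y)` of a `(1,1)`-tensor field `T`. -/
def covT (T : R.V → R.V) (X Y : R.V) : R.V := R.D X (T Y) - T (R.D X Y)

/-- `T` is a `(1,1)`-tensor field: it is `C^∞(M)`-linear. -/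
def IsTensor (T : R.V → R.V) : Prop :=
  (∀ X Y, T (X + Y) = T X + T Y) ∧ ∀ (f : R.F) (X : R.V), T (f • X) = f • T X

/-- `T` is symmetric with respect to the metric. -/
def IsSymmT (T : R.V → R.V) : Prop := ∀ X Y, R.g (T X) Y = R.g X (T Y)

/-- `T` is a Codazzi tensor field: `(∇_X T)(Y) = (∇_Y T)(X)`. -/
def IsCodazzi (T : R.V → R.V) : Prop := ∀ X Y, R.covT T X Y = R.covT T Y X

/-- The trace of a `(1,1)`-tensor field. -/
def traceT (T : R.V → R.V) : R.F := ∑ i, R.g (T (R.E i)) (R.E i)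

/-- The divergence of a `(1,1)`-tensor field, `div T = Σᵢ (∇_{Eᵢ}T)(Eᵢ)`. -/
def divT (T : R.V → R.V) : R.V := ∑ i, R.covT T (R.E i) (R.E i)

/-- The gradient of a function. -/
def gradF (f : R.F) : R.V := ∑ i, R.act (R.E i) f • R.E i

/-- The divergence of a vector field. -/
def divV (Z : R.V) : R.F := ∑ i, R.g (R.D (R.E i) Z) (R.E i)

/-- The geometric Laplacian `Δ f = -div(grad f)`
(sign convention matching `Δ^R T = -trace ∇²T`). -/
def lapF (f : R.F) : R.F := - R.divV (R.gradF f)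

/-- The pointwise inner product `⟨T,S⟩` of two `(1,1)`-tensor fields. -/
def innerTT (T S : R.V → R.V) : R.F :=
  ∑ i, ∑ j, R.g (T (R.E i)) (R.E j) * R.g (S (R.E i)) (R.E j)

/-- The pointwise squared norm `|T|²`. -/
def normT2 (T : R.V → R.V) : R.F := R.innerTT T T

/-- The pointwise inner product `⟨∇T, ∇S⟩` of the `(0,3)`-tensors `∇T`, `∇S`. -/
def innerNabla (T S : R.V → R.V) : R.F :=
  ∑ i, R.innerTT (fun Y => R.covT T (R.E i) Y) (fun Y => R.covT S (R.E i) Y)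

/-- The pointwise squared norm `|∇T|²`. -/
def normNabla2 (T : R.V → R.V) : R.F := R.innerNabla T T

/-- The second covariant derivative `(∇²T)(X,Y,Z) = (∇_X (∇T))(Y,Z)`. -/
def nabla2 (T : R.V → R.V) (X Y Z : R.V) : R.V :=
  R.D X (R.covT T Y Z) - R.covT T (R.D X Y) Z - R.covT T Y (R.D X Z)

/-- `trace(∇²T)`, as a `(1,1)`-tensor field. -/
def traceNabla2 (T : R.V → R.V) (X : R.V) : R.V := ∑ i, R.nabla2 T (R.E i) (R.E i) X

/-- The rough Laplacian `Δ^R T = -trace ∇²T`. -/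
def roughLap (T : R.V → R.V) (X : R.V) : R.V := - R.traceNabla2 T X

/-- The curvature tensor `R(X,Y)Z = ∇_X∇_Y Z - ∇_Y∇_X Z - ∇_{[X,Y]}Z`. -/
def curv (X Y Z : R.V) : R.V :=
  R.D X (R.D Y Z) - R.D Y (R.D X Z) - R.D (R.bracket X Y) Z

/-- A function is constant iff all its directional derivatives vanish
(`M` is assumed connected). -/
def IsConst (f : R.F) : Prop := ∀ X, R.act X f = 0

end RiemannianFrame

/-- The Gaussian curvature of a surface, `K = ⟨R(E₁,E₂)E₁, E₂⟩`. -/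
def RiemannianFrame.K (R : RiemannianFrame 2) : R.F :=
  R.g (R.curv (R.E 0) (R.E 1) (R.E 0)) (R.E 1)



/-!
Along an orthonormal eigenframe `W₁, W₂` of `T` everything is governed by the connection form
`ω(X) = ⟨∇_X W₁, W₂⟩`: one has `∇_X W₁ = ω(X) W₂`, `∇_X W₂ = -ω(X) W₁`, and, the eigenvalues
being constant, `(∇_X T)(Y) = (λ₁ - λ₂) ω(X) (⟨Y, W₂⟩ W₁ + ⟨Y, W₁⟩ W₂)`. Comparing the two sides
of the Codazzi equation for `(X, Y) = (W₁, W₂)` gives `(λ₁ - λ₂) ω = 0`, hence `∇T = 0`.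
If `λ₁ > λ₂` then `ω = 0`, so the frame is parallel and the curvature vanishes.
-/

namespace RiemannianFrame

variable {m : ℕ} (R : RiemannianFrame m)

theorem g_zero_left (Y : R.V) : R.g 0 Y = 0 := by
  simpa using R.g_smull 0 0 Y

theorem g_smul_right (f : R.F) (X Y : R.V) : R.g X (f • Y) = f * R.g X Y := by
  rw [R.g_symm, R.g_smull, R.g_symm]

theorem act_one (X : R.V) : R.act X 1 = 0 := by
  simpa using R.act_const X 1

theorem act_zero (X : R.V) : R.act X 0 = 0 := by
  simpa using R.act_const X 0

theorem g_D_self_eq_zero {W : R.V} (hW : R.g W W = 1) (X : R.V) : R.g (R.D X W) W = 0 := by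
  have h := R.metric_compat X W W
  rw [hW, act_one, R.g_symm W, ← two_smul ℝ] at h
  exact (smul_eq_zero.mp h.symm).resolve_left two_ne_zero

theorem g_D_eq_neg_of_g_eq_zero {W₁ W₂ : R.V} (h : R.g W₁ W₂ = 0) (X : R.V) :
    R.g (R.D X W₂) W₁ = -R.g (R.D X W₁) W₂ := by
  have h' := R.metric_compat X W₁ W₂
  rw [h, act_zero, R.g_symm W₁] at h'
  exact eq_neg_of_add_eq_zero_right h'.symm

theorem curv_add_right (X Y Z₁ Z₂ : R.V) :
    R.curv X Y (Z₁ + Z₂) = R.curv X Y Z₁ + R.curv X Y Z₂ := by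
  simp only [curv, R.D_addY]
  abel

theorem curv_smul_eq_zero_of_parallel {W : R.V} (hW : ∀ U, R.D U W = 0) (X Y : R.V) (f : R.F) :
    R.curv X Y (f • W) = 0 := by
  simp only [curv, R.D_leibniz, hW, smul_zero, add_zero, R.bracket_act]
  module

structure IsOrthonormalFrame (W₁ W₂ : R.V) : Prop where
  g_fst : R.g W₁ W₁ = 1
  g_snd : R.g W₂ W₂ = 1
  g_fst_snd : R.g W₁ W₂ = 0
  span : ∀ X, X = R.g X W₁ • W₁ + R.g X W₂ • W₂

def connectionForm (W₁ W₂ X : R.V) : R.F := R.g (R.D X W₁) W₂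

namespace IsOrthonormalFrame

variable {R} {W₁ W₂ : R.V}

theorem D_fst (hW : R.IsOrthonormalFrame W₁ W₂) (X : R.V) :
    R.D X W₁ = R.connectionForm W₁ W₂ X • W₂ := by
  conv_lhs => rw [hW.span (R.D X W₁), R.g_D_self_eq_zero hW.g_fst, zero_smul, zero_add]
  rfl

theorem D_snd (hW : R.IsOrthonormalFrame W₁ W₂) (X : R.V) :
    R.D X W₂ = -R.connectionForm W₁ W₂ X • W₁ := by
  conv_lhs => rw [hW.span (R.D X W₂), R.g_D_self_eq_zero hW.g_snd, zero_smul, add_zero,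
    R.g_D_eq_neg_of_g_eq_zero hW.g_fst_snd]
  rfl

theorem connectionForm_apply (hW : R.IsOrthonormalFrame W₁ W₂) (X : R.V) :
    R.connectionForm W₁ W₂ X =
      R.g X W₁ * R.connectionForm W₁ W₂ W₁ + R.g X W₂ * R.connectionForm W₁ W₂ W₂ := by
  conv_lhs => rw [connectionForm, hW.span X]
  rw [R.D_addX, R.D_smulX, R.D_smulX, R.g_addl, R.g_smull, R.g_smull]
  rfl

theorem act_g_fst (hW : R.IsOrthonormalFrame W₁ W₂) (X Y : R.V) :
    R.act X (R.g Y W₁) = R.g (R.D X Y) W₁ + R.connectionForm W₁ W₂ X * R.g Y W₂ := by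
  rw [R.metric_compat, hW.D_fst, R.g_smul_right]

theorem act_g_snd (hW : R.IsOrthonormalFrame W₁ W₂) (X Y : R.V) :
    R.act X (R.g Y W₂) = R.g (R.D X Y) W₂ - R.connectionForm W₁ W₂ X * R.g Y W₁ := by
  rw [R.metric_compat, hW.D_snd, R.g_smul_right]
  ring

section Eigenframe

variable {T : R.V → R.V} {μ ν : R.F}

theorem apply_eq_of_eigen (hW : R.IsOrthonormalFrame W₁ W₂) (hT : R.IsTensor T)
    (h₁ : T W₁ = μ • W₁) (h₂ : T W₂ = ν • W₂) (X : R.V) :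
    T X = (R.g X W₁ * μ) • W₁ + (R.g X W₂ * ν) • W₂ := by
  conv_lhs => rw [hW.span X]
  rw [hT.1, hT.2, hT.2, h₁, h₂, smul_smul, smul_smul]

theorem covT_eq_of_eigen (hW : R.IsOrthonormalFrame W₁ W₂) (hT : R.IsTensor T)
    (hμ : R.IsConst μ) (hν : R.IsConst ν) (h₁ : T W₁ = μ • W₁) (h₂ : T W₂ = ν • W₂)
    (X Y : R.V) :
    R.covT T X Y = ((μ - ν) * R.connectionForm W₁ W₂ X * R.g Y W₂) • W₁ +
      ((μ - ν) * R.connectionForm W₁ W₂ X * R.g Y W₁) • W₂ := by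
  rw [covT, hW.apply_eq_of_eigen hT h₁ h₂, hW.apply_eq_of_eigen hT h₁ h₂, R.D_addY,
    R.D_leibniz, R.D_leibniz, hW.D_fst, hW.D_snd, R.act_mulf, R.act_mulf, hμ, hν,
    hW.act_g_fst, hW.act_g_snd, smul_smul, smul_smul]
  module

theorem sub_mul_connectionForm_eq_zero (hW : R.IsOrthonormalFrame W₁ W₂) (hT : R.IsTensor T)
    (hμ : R.IsConst μ) (hν : R.IsConst ν) (h₁ : T W₁ = μ • W₁) (h₂ : T W₂ = ν • W₂)
    (hcod : R.IsCodazzi T) (X : R.V) :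
    (μ - ν) * R.connectionForm W₁ W₂ X = 0 := by
  have hcod₁₂ := hcod W₁ W₂
  rw [hW.covT_eq_of_eigen hT hμ hν h₁ h₂, hW.covT_eq_of_eigen hT hμ hν h₁ h₂] at hcod₁₂
  have hg₂₁ : R.g W₂ W₁ = 0 := by rw [R.g_symm, hW.g_fst_snd]
  have hω₁ : (μ - ν) * R.connectionForm W₁ W₂ W₁ = 0 := by
    simpa [R.g_addl, R.g_smull, hW.g_fst, hW.g_snd, hW.g_fst_snd, hg₂₁] using
      congrArg (R.g · W₁) hcod₁₂
  have hω₂ : (μ - ν) * R.connectionForm W₁ W₂ W₂ = 0 := by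
    simpa [R.g_addl, R.g_smull, hW.g_fst, hW.g_snd, hW.g_fst_snd, hg₂₁] using
      (congrArg (R.g · W₂) hcod₁₂).symm
  rw [hW.connectionForm_apply]
  linear_combination R.g X W₁ * hω₁ + R.g X W₂ * hω₂

theorem covT_eq_zero_of_isCodazzi (hW : R.IsOrthonormalFrame W₁ W₂) (hT : R.IsTensor T)
    (hμ : R.IsConst μ) (hν : R.IsConst ν) (h₁ : T W₁ = μ • W₁) (h₂ : T W₂ = ν • W₂)
    (hcod : R.IsCodazzi T) (X Y : R.V) :
    R.covT T X Y = 0 := by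
  rw [hW.covT_eq_of_eigen hT hμ hν h₁ h₂,
    hW.sub_mul_connectionForm_eq_zero hT hμ hν h₁ h₂ hcod, zero_mul, zero_mul, zero_smul,
    zero_smul, add_zero]

end Eigenframe

theorem curv_eq_zero (hW : R.IsOrthonormalFrame W₁ W₂)
    (hω : ∀ X, R.connectionForm W₁ W₂ X = 0) (X Y Z : R.V) :
    R.curv X Y Z = 0 := by
  have hD₁ : ∀ U, R.D U W₁ = 0 := fun U => by rw [hW.D_fst, hω, zero_smul]
  have hD₂ : ∀ U, R.D U W₂ = 0 := fun U => by rw [hW.D_snd, hω, neg_zero, zero_smul]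
  rw [hW.span Z, R.curv_add_right, R.curv_smul_eq_zero_of_parallel hD₁,
    R.curv_smul_eq_zero_of_parallel hD₂, add_zero]

end IsOrthonormalFrame

end RiemannianFrame

open RiemannianFrame in
theorem stmt5_general (R : RiemannianFrame 2) (T : R.V → R.V)
    (hT : R.IsTensor T)
    (lam1 lam2 : ℝ)
    (W1 W2 : R.V)
    (hW1 : R.g W1 W1 = 1) (hW2 : R.g W2 W2 = 1) (hW12 : R.g W1 W2 = 0)
    (hspan : ∀ X, X = R.g X W1 • W1 + R.g X W2 • W2)
    (heig1 : T W1 = algebraMap ℝ R.F lam1 • W1)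
    (heig2 : T W2 = algebraMap ℝ R.F lam2 • W2)
    (hcod : R.IsCodazzi T) :
    (∀ X Y, R.covT T X Y = 0) ∧ (lam2 < lam1 → R.K = 0) := by
  have hW : R.IsOrthonormalFrame W1 W2 := ⟨hW1, hW2, hW12, hspan⟩
  have hconst : ∀ r : ℝ, R.IsConst (algebraMap ℝ R.F r) := fun r X => R.act_const X r
  refine ⟨hW.covT_eq_zero_of_isCodazzi hT (hconst lam1) (hconst lam2) heig1 heig2 hcod,
    fun hlt => ?_⟩
  have hgap : IsUnit (algebraMap ℝ R.F lam1 - algebraMap ℝ R.F lam2) := by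
    rw [← map_sub]
    exact (sub_ne_zero.mpr hlt.ne').isUnit.map _
  have hω : ∀ X, R.connectionForm W1 W2 X = 0 := fun X =>
    hgap.mul_left_cancel <| by
      rw [mul_zero]
      exact hW.sub_mul_connectionForm_eq_zero hT (hconst lam1) (hconst lam2) heig1 heig2 hcod X
  rw [K, hW.curv_eq_zero hω, g_zero_left]

/-- On a surface, if the eigenvalue functions `λ₁ ≥ λ₂` of a
symmetric `(1,1)`-tensor field `T` are constant (real numbers) and `T` is a
Codazzi tensor field, then `∇T = 0`; moreover if `λ₁ > λ₂` the Gaussian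
curvature vanishes identically.  The (locally existing) orthonormal
eigenframe is `W₁, W₂`. -/
theorem stmt5 (R : RiemannianFrame 2) (T : R.V → R.V)
    (hT : R.IsTensor T) (hTsymm : R.IsSymmT T)
    (lam1 lam2 : ℝ) (hle : lam2 ≤ lam1)
    (W1 W2 : R.V)
    (hW1 : R.g W1 W1 = 1) (hW2 : R.g W2 W2 = 1) (hW12 : R.g W1 W2 = 0)
    (hspan : ∀ X, X = R.g X W1 • W1 + R.g X W2 • W2)
    (heig1 : T W1 = algebraMap ℝ R.F lam1 • W1)
    (heig2 : T W2 = algebraMap ℝ R.F lam2 • W2)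
    (hcod : R.IsCodazzi T) :
    (∀ X Y, R.covT T X Y = 0) ∧ (lam2 < lam1 → R.K = 0) :=
  stmt5_general R T hT lam1 lam2 W1 W2 hW1 hW2 hW12 hspan heig1 heig2 hcod
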